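/- Let X_n be the Class DIII Wigner-type ensemble, let m ≥ 3, and let g = τγ^ν ∈ D_{2m} be a reflection (ν ∈ {0,…,m−1}). Then lim_{n→∞} n^{−m} · Σ_{P ∈ S_n^{good}(π̂_g)} ∏_{l=1}^m E[a_n(P_{1,l})·a_n(P_{2,g(l)})] equals 0 if m is odd, and equals 2^{m+1}·σ^{2m} if m is even. -/

import Mathlib

open MeasureTheory ProbabilityTheory Matrix Filter

noncomputable section

/-- `blk d a` is index `a` in the first block row/column if `d = 0`, and in the
second block row/column otherwise (encoding `n·d + a` in `[2n]`). -/
def blk {n : ℕ} (d : ℕ) (a : Fin n) : Fin n ⊕ Fin n :=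
  if d = 0 then Sum.inl a else Sum.inr a

/-- A Δ-matrix: a `2 × 2` matrix with entries in `{0,1}` whose entries sum to an
even number. -/
def IsDelta (D : Matrix (Fin 2) (Fin 2) ℕ) : Prop :=
  (∀ i j, D i j ≤ 1) ∧ Even (D 0 0 + D 0 1 + D 1 0 + D 1 1)

/-- The (unnormalized) class DIII block matrix built from `X₁, X₂`; its `(p,q)` entry
is `a_n(p,q)`, the `(p,q)` entry of `√(2n)·X_n`. -/
def dIIIBlock {n : ℕ} (X₁ X₂ : Matrix (Fin n) (Fin n) ℂ) :
    Matrix (Fin n ⊕ Fin n) (Fin n ⊕ Fin n) ℂ :=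
  Matrix.fromBlocks X₁ X₂ X₂ (-X₁)

/-- The space `M_n^{DIII}`: block matrices `[[X₁,X₂],[X₂,−X₁]]` with `X₁, X₂`
skew-symmetric with purely imaginary entries. `[2n]` is encoded as `Fin n ⊕ Fin n`. -/
def MDIII (n : ℕ) : Set (Matrix (Fin n ⊕ Fin n) (Fin n ⊕ Fin n) ℂ) :=
  {M | ∃ X₁ X₂ : Matrix (Fin n) (Fin n) ℂ,
    (∀ a b, (X₁ a b).re = 0) ∧ (∀ a b, (X₂ a b).re = 0) ∧
    X₁ᵀ = -X₁ ∧ X₂ᵀ = -X₂ ∧ M = Matrix.fromBlocks X₁ X₂ X₂ (-X₁)}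

/-- The coordinate functional `X ↦ X_{p,q}` on `M_n^{DIII}` is nonzero. -/
def NonzeroAtDIII (n : ℕ) (P : (Fin n ⊕ Fin n) × (Fin n ⊕ Fin n)) : Prop :=
  ∃ M ∈ MDIII n, M P.1 P.2 ≠ 0

/-- `(p,q) ∼ (r,s)`: both coordinate functionals on `M_n^{DIII}` are nonzero and
equal up to sign. -/
def simDIII (n : ℕ) (P Q : (Fin n ⊕ Fin n) × (Fin n ⊕ Fin n)) : Prop :=
  NonzeroAtDIII n P ∧ NonzeroAtDIII n Q ∧
    ((∀ M ∈ MDIII n, M Q.1 Q.2 = M P.1 P.2) ∨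
      (∀ M ∈ MDIII n, M Q.1 Q.2 = -(M P.1 P.2)))

/-- A multi-index `P = (P_{i,l}) = ((p_{i,l},q_{i,l}))` is consistent if
`q_{i,l} = p_{i,l+1}` cyclically, for `i = 1, 2`. -/
def IsConsistent {n m : ℕ} [NeZero m]
    (P : Fin 2 → Fin m → ((Fin n ⊕ Fin n) × (Fin n ⊕ Fin n))) : Prop :=
  ∀ i l, (P i l).2 = (P i (l + 1)).1

/-- `P ∈ S_n^{good}(π̂_g)`: `P` is a consistent multi-index, every `P_{i,l}` lies in
the domain of `∼`, and the `∼`-relations among the `2m` index pairs are exactly those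
given by the pair partition `π̂_g = {{(1,l),(2,g(l))} : l ∈ [m]}`. -/
def SGoodDIII (n m : ℕ) [NeZero m] (g : Fin m → Fin m)
    (P : Fin 2 → Fin m → ((Fin n ⊕ Fin n) × (Fin n ⊕ Fin n))) : Prop :=
  IsConsistent P ∧ (∀ i l, NonzeroAtDIII n (P i l)) ∧
    ∀ i l i' l', simDIII n (P i l) (P i' l') ↔
      ((i = i' ∧ l = l') ∨ (i = 0 ∧ i' = 1 ∧ l' = g l) ∨ (i = 1 ∧ i' = 0 ∧ l = g l'))

/-!
Write the two rows of a good multi-index as closed walks `u`, `w` in `[2n] = Fin n ⊕ Fin n`, with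
`P_{1,l} = (u(l), u(l+1))` and `P_{2,g(l)} = (w(l+1), w(l))`. Two index pairs are `∼` exactly when
they carry the same two distinct positions and the same block pattern (diagonal or off-diagonal
blocks), so every factor is `±E[X(a,b)²] = ∓σ²` and has modulus `σ²`.

If the positions of `u` are distinct, goodness forces `w = u`, or `w = u` with every index moved to
the other block. Since `M(q,p) = -M(p,q)`, and moving both indices of an entry to the other block
flips its sign exactly in the diagonal blocks, the product of the factors is `σ^{2m}`, resp.
`(-1)^m σ^{2m}` (a closed walk changes block an even number of times). The `2^m n(n-1)⋯(n-m+1)`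
such walks `u` give the limit `2^m (1 + (-1)^m) σ^{2m}`. Every other `u` repeats a position, so
there are `O(n^{m-1})` of them, and each extends to at most `2^{m+1}` good multi-indices.
-/

section Cycle

open Function Finset
open scoped Fin.CommRing

variable {m : ℕ} [NeZero m] {X : Type*}

theorem Fin.funext_of_add_one {f f' : Fin m → X} (h0 : f 0 = f' 0)
    (h : ∀ l, f l = f' l → f (l + 1) = f' (l + 1)) : f = f' := by
  funext l
  rw [← Fin.cast_val_eq_self l]
  induction (l : ℕ) with
  | zero => simpa using h0
  | succ k ih => simpa using h _ ih

theorem Fin.add_one_ne_self (hm : 2 ≤ m) (l : Fin m) : l + 1 ≠ l := by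
  intro h
  have : ((1 : ℕ) : Fin m) = 0 := by simpa using h
  have := Nat.le_of_dvd Nat.one_pos (Fin.natCast_eq_zero.1 this)
  omega

theorem Fin.add_two_ne_self (hm : 3 ≤ m) (l : Fin m) : l + 2 ≠ l := by
  intro h
  have : ((2 : ℕ) : Fin m) = 0 := by simpa using h
  have := Nat.le_of_dvd Nat.two_pos (Fin.natCast_eq_zero.1 this)
  omega

theorem Bool.exists_forall_eq_xor_of_forall_iff {d e : Fin m → Bool}
    (h : ∀ l, (e l = e (l + 1) ↔ d l = d (l + 1))) : ∃ b, ∀ l, e l = (d l ^^ b) := by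
  refine ⟨e 0 ^^ d 0, congrFun (Fin.funext_of_add_one (f' := fun l => d l ^^ (e 0 ^^ d 0))
    (by cases e 0 <;> cases d 0 <;> rfl) fun l hl => ?_)⟩
  have := h l
  generalize (e 0 ^^ d 0) = b at hl ⊢
  cases b <;> cases hd : d l <;> cases hd' : d (l + 1) <;> simp_all

theorem prod_ite_eq_apply_add_one {R : Type*} [CommRing R] (d : Fin m → Bool) :
    (∏ l, if d l = d (l + 1) then (-1 : R) else 1) = (-1) ^ m := by
  let χ : Bool → R := fun b => if b then 1 else -1
  have hχ : ∀ b, χ b * χ b = 1 := fun b => by cases b <;> simp [χ]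
  have hstep : ∀ l, (if d l = d (l + 1) then (-1 : R) else 1) =
      -1 * (χ (d l) * χ (d (l + 1))) := fun l => by
    cases d l <;> cases d (l + 1) <;> simp [χ]
  have hshift : (∏ l, χ (d (l + 1))) = ∏ l, χ (d l) :=
    Fintype.prod_equiv (Equiv.addRight 1) _ _ fun _ => rfl
  simp_rw [hstep, prod_mul_distrib, hshift, ← prod_mul_distrib, hχ]
  simp

theorem Function.Injective.apply_ne_apply_add_one {α : Fin m → X} (hα : Injective α)
    (hm : 2 ≤ m) (l : Fin m) : α l ≠ α (l + 1) :=
  fun h => Fin.add_one_ne_self hm l (hα h).symm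

def SameSteps (α β : Fin m → X) : Prop :=
  ∀ l, (β l = α l ∧ β (l + 1) = α (l + 1)) ∨ (β l = α (l + 1) ∧ β (l + 1) = α l)

theorem Function.Injective.eq_of_same_edge {α : Fin m → X} (hα : Injective α) (hm : 3 ≤ m)
    {e e' : Fin m}
    (h : (α e' = α e ∧ α (e' + 1) = α (e + 1)) ∨ (α e' = α (e + 1) ∧ α (e' + 1) = α e)) :
    e' = e := by
  rcases h with ⟨h, -⟩ | ⟨h, h'⟩
  · exact hα h
  · have h1 : e' = e + 1 := hα h
    have h2 : e' + 1 = e := hα h'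
    exact absurd (by linear_combination h2 - h1) (Fin.add_two_ne_self hm e)

theorem SameSteps.eq_of_injective {α β : Fin m → X} (h : SameSteps α β) (hα : Injective α)
    (hm : 3 ≤ m) : β = α := by
  funext k
  rcases h k with ⟨hk, -⟩ | ⟨-, hk⟩
  · exact hk
  · rcases h (k + 1) with ⟨h1, -⟩ | ⟨h2, -⟩
    · exact absurd (hk.symm.trans h1) (hα.apply_ne_apply_add_one (by omega) k)
    · refine absurd (hα (hk.symm.trans h2)) ?_
      rw [add_assoc, one_add_one_eq_two]
      exact (Fin.add_two_ne_self hm k).symm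

theorem SameSteps.eq_of_apply_zero_eq {α β β' : Fin m → X} (hα : ∀ l, α l ≠ α (l + 1))
    (h : SameSteps α β) (h' : SameSteps α β') (h0 : β 0 = β' 0) : β = β' := by
  refine Fin.funext_of_add_one h0 fun l hl => ?_
  rcases h l with ⟨h1, h2⟩ | ⟨h1, h2⟩ <;> rcases h' l with ⟨h3, h4⟩ | ⟨h3, h4⟩
  · rw [h2, h4]
  · exact absurd (h1.symm.trans (hl.trans h3)) (hα l)
  · exact absurd (h3.symm.trans (hl.symm.trans h1)) (hα l)
  · rw [h2, h4]

end Cycle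

namespace DIII

open Function Matrix

section Entries

variable {n : ℕ}

/-- The position of an index of `[2n] = Fin n ⊕ Fin n` inside its block (the block itself is
`Sum.isRight`). -/
def pos : Fin n ⊕ Fin n → Fin n := Sum.elim id id

@[simp] theorem pos_inl (a : Fin n) : pos (.inl a) = a := rfl

@[simp] theorem pos_inr (a : Fin n) : pos (.inr a) = a := rfl

@[simp] theorem pos_swap (p : Fin n ⊕ Fin n) : pos p.swap = pos p := by cases p <;> rfl

theorem eq_of_pos_eq_of_isRight_eq {p q : Fin n ⊕ Fin n} (hpos : pos p = pos q)
    (hblock : p.isRight = q.isRight) : p = q := by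
  cases p <;> cases q <;> simp_all

def swapIf (b : Bool) (p : Fin n ⊕ Fin n) : Fin n ⊕ Fin n := if b then p.swap else p

@[simp] theorem pos_swapIf (b : Bool) (p : Fin n ⊕ Fin n) : pos (swapIf b p) = pos p := by
  cases b <;> simp [swapIf]

theorem swapIf_left_injective (p : Fin n ⊕ Fin n) : Injective (swapIf · p) := by
  intro b b' h
  cases b <;> cases b' <;> cases p <;> simp_all [swapIf]

theorem dIIIBlock_apply (X₁ X₂ : Matrix (Fin n) (Fin n) ℂ) (p q : Fin n ⊕ Fin n) :
    dIIIBlock X₁ X₂ p q = (if p.isRight ∧ q.isRight then -1 else 1) *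
      (if p.isRight = q.isRight then X₁ else X₂) (pos p) (pos q) := by
  cases p <;> cases q <;> simp [dIIIBlock]

theorem dIIIBlock_apply_sq (X₁ X₂ : Matrix (Fin n) (Fin n) ℂ) (p q : Fin n ⊕ Fin n) :
    dIIIBlock X₁ X₂ p q ^ 2 = (if p.isRight = q.isRight then X₁ else X₂) (pos p) (pos q) ^ 2 := by
  rw [dIIIBlock_apply, mul_pow]
  split_ifs <;> norm_num

theorem dIIIBlock_apply_eq_zero_iff (X₁ X₂ : Matrix (Fin n) (Fin n) ℂ) (p q : Fin n ⊕ Fin n) :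
    dIIIBlock X₁ X₂ p q = 0 ↔ (if p.isRight = q.isRight then X₁ else X₂) (pos p) (pos q) = 0 := by
  rw [dIIIBlock_apply, mul_eq_zero, or_iff_right]
  split_ifs <;> norm_num

theorem dIIIBlock_mem_MDIII {X₁ X₂ : Matrix (Fin n) (Fin n) ℂ} (h₁ : ∀ a b, (X₁ a b).re = 0)
    (h₂ : ∀ a b, (X₂ a b).re = 0) (s₁ : X₁ᵀ = -X₁) (s₂ : X₂ᵀ = -X₂) :
    dIIIBlock X₁ X₂ ∈ MDIII n :=
  ⟨X₁, X₂, h₁, h₂, s₁, s₂, rfl⟩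

theorem MDIII.apply_eq_neg {M : Matrix (Fin n ⊕ Fin n) (Fin n ⊕ Fin n) ℂ} (hM : M ∈ MDIII n)
    (p q : Fin n ⊕ Fin n) : M q p = -M p q := by
  obtain ⟨X₁, X₂, -, -, s₁, s₂, rfl⟩ := hM
  have hT : (fromBlocks X₁ X₂ X₂ (-X₁))ᵀ = -fromBlocks X₁ X₂ X₂ (-X₁) := by
    rw [fromBlocks_transpose, s₁, s₂, transpose_neg, s₁, fromBlocks_neg, neg_neg]
  exact congrFun (congrFun hT p) q

theorem MDIII.apply_swap_swap {M : Matrix (Fin n ⊕ Fin n) (Fin n ⊕ Fin n) ℂ} (hM : M ∈ MDIII n)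
    (p q : Fin n ⊕ Fin n) :
    M p.swap q.swap = (if p.isRight = q.isRight then -1 else 1) * M p q := by
  obtain ⟨X₁, X₂, -, -, -, -, rfl⟩ := hM
  cases p <;> cases q <;> simp

theorem MDIII.apply_swapIf_swapIf {M : Matrix (Fin n ⊕ Fin n) (Fin n ⊕ Fin n) ℂ}
    (hM : M ∈ MDIII n) (b : Bool) (p q : Fin n ⊕ Fin n) :
    M (swapIf b q) (swapIf b p) = -(if b ∧ p.isRight = q.isRight then -1 else 1) * M p q := by
  rw [MDIII.apply_eq_neg hM]
  cases b <;> simp [swapIf, MDIII.apply_swap_swap hM]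

theorem MDIII.apply_diag {M : Matrix (Fin n ⊕ Fin n) (Fin n ⊕ Fin n) ℂ} (hM : M ∈ MDIII n)
    {p q : Fin n ⊕ Fin n} (h : pos p = pos q) : M p q = 0 := by
  obtain ⟨X₁, X₂, -, -, s₁, s₂, rfl⟩ := hM
  have hdiag : ∀ X : Matrix (Fin n) (Fin n) ℂ, Xᵀ = -X → ∀ a, X a a = 0 := fun X hX a => by
    have := congrFun (congrFun hX a) a
    simp only [transpose_apply, Matrix.neg_apply] at this
    linear_combination this / 2
  rw [← dIIIBlock, dIIIBlock_apply_eq_zero_iff, h]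
  split_ifs
  exacts [hdiag _ s₁ _, hdiag _ s₂ _]

def skewUnit (a b : Fin n) : Matrix (Fin n) (Fin n) ℂ :=
  Complex.I • (single a b 1 - single b a 1)

theorem skewUnit_apply_ne_zero_iff {a b : Fin n} (hab : a ≠ b) (c d : Fin n) :
    skewUnit a b c d ≠ 0 ↔ (c = a ∧ d = b) ∨ (c = b ∧ d = a) := by
  simp only [skewUnit, Matrix.smul_apply, Matrix.sub_apply, single_apply, smul_eq_mul]
  by_cases h1 : c = a <;> by_cases h2 : d = b <;> by_cases h3 : c = b <;> by_cases h4 : d = a <;>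
    simp_all [eq_comm]

def testMatrix (same : Prop) [Decidable same] (a b : Fin n) :
    Matrix (Fin n ⊕ Fin n) (Fin n ⊕ Fin n) ℂ :=
  dIIIBlock (if same then skewUnit a b else 0) (if same then 0 else skewUnit a b)

theorem testMatrix_mem (same : Prop) [Decidable same] (a b : Fin n) :
    testMatrix same a b ∈ MDIII n := by
  have hre : ∀ c d, (skewUnit a b c d).re = 0 := fun c d => by
    simp only [skewUnit, Matrix.smul_apply, smul_eq_mul, Complex.I_mul_re, Matrix.sub_apply,
      Complex.sub_im, single_apply]
    split_ifs <;> simp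
  have hskew : (skewUnit a b)ᵀ = -skewUnit a b := by
    rw [skewUnit, transpose_smul, transpose_sub, transpose_single, transpose_single, ← smul_neg,
      neg_sub]
  apply dIIIBlock_mem_MDIII <;> split_ifs <;> simp [hre, hskew]

theorem testMatrix_apply_ne_zero_iff (same : Prop) [Decidable same] {a b : Fin n} (hab : a ≠ b)
    (p q : Fin n ⊕ Fin n) :
    testMatrix same a b p q ≠ 0 ↔ ((p.isRight = q.isRight) ↔ same) ∧
      ((pos p = a ∧ pos q = b) ∨ (pos p = b ∧ pos q = a)) := by
  rw [testMatrix, Ne, dIIIBlock_apply_eq_zero_iff, ← Ne]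
  by_cases hpq : p.isRight = q.isRight <;> by_cases same <;>
    simp_all [skewUnit_apply_ne_zero_iff hab]

end Entries

end DIII

section Similarity

open DIII

variable {n : ℕ} {P Q R : (Fin n ⊕ Fin n) × (Fin n ⊕ Fin n)}

theorem nonzeroAtDIII_iff : NonzeroAtDIII n P ↔ pos P.1 ≠ pos P.2 := by
  refine ⟨fun ⟨M, hM, hne⟩ h => hne (MDIII.apply_diag hM h), fun h => ?_⟩
  refine ⟨_, testMatrix_mem (P.1.isRight = P.2.isRight) (pos P.1) (pos P.2), ?_⟩
  exact (testMatrix_apply_ne_zero_iff _ h _ _).2 ⟨Iff.rfl, .inl ⟨rfl, rfl⟩⟩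

theorem simDIII_iff_exists_sign : simDIII n P Q ↔ NonzeroAtDIII n P ∧ NonzeroAtDIII n Q ∧
    ∃ ε : ℂ, ε * ε = 1 ∧ ∀ M ∈ MDIII n, M Q.1 Q.2 = ε * M P.1 P.2 := by
  refine and_congr_right' (and_congr_right' ⟨?_, fun ⟨ε, hε, h⟩ => ?_⟩)
  · rintro (h | h)
    exacts [⟨1, one_mul 1, by simpa using h⟩, ⟨-1, by norm_num, by simpa using h⟩]
  · rcases mul_self_eq_one_iff.1 hε with rfl | rfl
    exacts [.inl (by simpa using h), .inr (by simpa using h)]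

theorem simDIII.symm (h : simDIII n P Q) : simDIII n Q P := by
  obtain ⟨hP, hQ, ε, hε, h⟩ := simDIII_iff_exists_sign.1 h
  refine simDIII_iff_exists_sign.2 ⟨hQ, hP, ε, hε, fun M hM => ?_⟩
  rw [h M hM, ← mul_assoc, hε, one_mul]

theorem simDIII.trans (h₁ : simDIII n P Q) (h₂ : simDIII n Q R) : simDIII n P R := by
  obtain ⟨hP, -, ε₁, hε₁, h₁⟩ := simDIII_iff_exists_sign.1 h₁
  obtain ⟨-, hR, ε₂, hε₂, h₂⟩ := simDIII_iff_exists_sign.1 h₂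
  refine simDIII_iff_exists_sign.2 ⟨hP, hR, ε₂ * ε₁, ?_, fun M hM => ?_⟩
  · linear_combination ε₂ * ε₂ * hε₁ + hε₂
  · rw [h₂ M hM, h₁ M hM, mul_assoc]

theorem simDIII_refl (h : NonzeroAtDIII n P) : simDIII n P P :=
  simDIII_iff_exists_sign.2 ⟨h, h, 1, one_mul 1, fun _ _ => (one_mul _).symm⟩

theorem simDIII_congr {P' Q' : (Fin n ⊕ Fin n) × (Fin n ⊕ Fin n)} (hP : simDIII n P P')
    (hQ : simDIII n Q Q') : simDIII n P Q ↔ simDIII n P' Q' :=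
  ⟨fun h => (hP.symm.trans h).trans hQ, fun h => (hP.trans h).trans hQ.symm⟩

theorem simDIII_swapIf_reverse {p q : Fin n ⊕ Fin n} (h : NonzeroAtDIII n (p, q)) (b : Bool) :
    simDIII n (p, q) (swapIf b q, swapIf b p) := by
  have h' : NonzeroAtDIII n (swapIf b q, swapIf b p) := by
    rw [nonzeroAtDIII_iff] at h ⊢
    simpa using Ne.symm h
  refine simDIII_iff_exists_sign.2 ⟨h, h', _, ?_, fun M hM => MDIII.apply_swapIf_swapIf hM b p q⟩
  split_ifs <;> norm_num

theorem simDIII.apply_testMatrix_ne_zero (h : simDIII n P Q) :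
    testMatrix (P.1.isRight = P.2.isRight) (pos P.1) (pos P.2) Q.1 Q.2 ≠ 0 := by
  obtain ⟨hP, -, ε, hε, h⟩ := simDIII_iff_exists_sign.1 h
  have hab := nonzeroAtDIII_iff.1 hP
  rw [h _ (testMatrix_mem _ _ _)]
  refine mul_ne_zero (left_ne_zero_of_mul_eq_one hε) ?_
  exact (testMatrix_apply_ne_zero_iff _ hab _ _).2 ⟨Iff.rfl, .inl ⟨rfl, rfl⟩⟩

theorem simDIII.isRight_eq_iff (h : simDIII n P Q) :
    Q.1.isRight = Q.2.isRight ↔ P.1.isRight = P.2.isRight :=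
  ((testMatrix_apply_ne_zero_iff _
    (nonzeroAtDIII_iff.1 h.1) _ _).1 h.apply_testMatrix_ne_zero).1

theorem simDIII.pos_eq (h : simDIII n P Q) :
    (pos Q.1 = pos P.1 ∧ pos Q.2 = pos P.2) ∨ (pos Q.1 = pos P.2 ∧ pos Q.2 = pos P.1) :=
  ((testMatrix_apply_ne_zero_iff _
    (nonzeroAtDIII_iff.1 h.1) _ _).1 h.apply_testMatrix_ne_zero).2

end Similarity

namespace DIII

open Function
open scoped Fin.CommRing

variable {n m : ℕ} [NeZero m]

def walk (v : Fin 2 → Fin m → Fin n ⊕ Fin n) :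
    Fin 2 → Fin m → (Fin n ⊕ Fin n) × (Fin n ⊕ Fin n) :=
  fun i l => (v i l, v i (l + 1))

/-- The multi-index with `P_{1,l} = (u(l), u(l+1))` and `P_{2,c-l} = (w(l+1), w(l))`: read through
the reflection `l ↦ c - l`, the second walk is `w` run backwards. -/
def reflWalk (c : Fin m) (u w : Fin m → Fin n ⊕ Fin n) :
    Fin 2 → Fin m → (Fin n ⊕ Fin n) × (Fin n ⊕ Fin n) :=
  walk ![u, fun k => w (c + 1 - k)]

variable {c : Fin m} {u w : Fin m → Fin n ⊕ Fin n}

@[simp] theorem reflWalk_zero (l : Fin m) : reflWalk c u w 0 l = (u l, u (l + 1)) := rfl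

theorem reflWalk_one (k : Fin m) : reflWalk c u w 1 k = (w (c - k + 1), w (c - k)) := by
  simp only [reflWalk, walk, Matrix.cons_val_one, Matrix.cons_val_zero]
  congr 2 <;> ring

@[simp] theorem reflWalk_one_sub (l : Fin m) : reflWalk c u w 1 (c - l) = (w (l + 1), w l) := by
  rw [reflWalk_one, sub_sub_cancel]

theorem reflWalk_injective (c : Fin m) :
    Injective fun uw : (Fin m → Fin n ⊕ Fin n) × (Fin m → Fin n ⊕ Fin n) =>
      reflWalk c uw.1 uw.2 := by
  rintro ⟨u, w⟩ ⟨u', w'⟩ h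
  have h0 : u = u' := funext fun l => congrArg Prod.fst (congrFun (congrFun h 0) l)
  have h1 : w = w' := funext fun l => by
    simpa using congrArg Prod.snd (congrFun (congrFun h 1) (c - l))
  rw [h0, h1]

end DIII

section GoodWalks

open Function DIII
open scoped Fin.CommRing

variable {n m : ℕ} [NeZero m]

theorem IsConsistent.eq_reflWalk {P : Fin 2 → Fin m → (Fin n ⊕ Fin n) × (Fin n ⊕ Fin n)}
    (h : IsConsistent P) (c : Fin m) :
    P = reflWalk c (fun l => (P 0 l).1) (fun k => (P 1 (c + 1 - k)).1) := by
  funext i l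
  fin_cases i <;> simp [reflWalk, walk, Prod.ext_iff, h _ l]

theorem SGoodDIII.simDIII {g : Fin m → Fin m}
    {P : Fin 2 → Fin m → (Fin n ⊕ Fin n) × (Fin n ⊕ Fin n)} (h : SGoodDIII n m g P) (l : Fin m) :
    simDIII n (P 0 l) (P 1 (g l)) :=
  (h.2.2 0 l 1 (g l)).2 (.inr (.inl ⟨rfl, rfl, rfl⟩))

variable {c : Fin m} {u w : Fin m → Fin n ⊕ Fin n}

theorem setOf_sGoodDIII_eq_image_reflWalk (c : Fin m) :
    {P | SGoodDIII n m (c - ·) P} =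
      (fun uw : (Fin m → Fin n ⊕ Fin n) × (Fin m → Fin n ⊕ Fin n) => reflWalk c uw.1 uw.2) ''
        {uw | SGoodDIII n m (c - ·) (reflWalk c uw.1 uw.2)} := by
  ext P
  refine ⟨fun h => ⟨(_, _), ?_, (h.1.eq_reflWalk c).symm⟩, fun ⟨_, h, hP⟩ => hP ▸ h⟩
  rwa [Set.mem_ofPred_eq, ← h.1.eq_reflWalk c]

theorem SGoodDIII.reflWalk_steps (h : SGoodDIII n m (c - ·) (reflWalk c u w)) (l : Fin m) :
    pos (u l) ≠ pos (u (l + 1)) ∧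
      ((w l).isRight = (w (l + 1)).isRight ↔ (u l).isRight = (u (l + 1)).isRight) ∧
      ((pos (w l) = pos (u l) ∧ pos (w (l + 1)) = pos (u (l + 1))) ∨
        (pos (w l) = pos (u (l + 1)) ∧ pos (w (l + 1)) = pos (u l))) := by
  have hs := h.simDIII l
  simp only [reflWalk_zero, reflWalk_one_sub] at hs
  refine ⟨nonzeroAtDIII_iff.1 hs.1, eq_comm.trans hs.isRight_eq_iff, ?_⟩
  rcases hs.pos_eq with ⟨h1, h2⟩ | ⟨h1, h2⟩
  exacts [.inr ⟨h2, h1⟩, .inl ⟨h2, h1⟩]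

theorem SGoodDIII.reflWalk_sameSteps (h : SGoodDIII n m (c - ·) (reflWalk c u w)) :
    SameSteps (pos ∘ u) (pos ∘ w) :=
  fun l => (h.reflWalk_steps l).2.2

theorem sGoodDIII_reflWalk_iff (hm : 3 ≤ m) (hu : Injective (pos ∘ u)) :
    SGoodDIII n m (c - ·) (reflWalk c u w) ↔ ∃ b, w = swapIf b ∘ u := by
  constructor
  · intro h
    have hpos : pos ∘ w = pos ∘ u := h.reflWalk_sameSteps.eq_of_injective hu hm
    obtain ⟨b, hb⟩ := Bool.exists_forall_eq_xor_of_forall_iff fun l => (h.reflWalk_steps l).2.1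
    refine ⟨b, funext fun l => eq_of_pos_eq_of_isRight_eq (by simpa using congrFun hpos l) ?_⟩
    cases b <;> simp [swapIf, hb]
  · rintro ⟨b, rfl⟩
    let edge : Fin 2 → Fin m → Fin m := fun i l => if i = 0 then l else c - l
    have hE : ∀ e, NonzeroAtDIII n (u e, u (e + 1)) := fun e =>
      nonzeroAtDIII_iff.2 (hu.apply_ne_apply_add_one (by omega) e)
    have hEP : ∀ i l,
        simDIII n (u (edge i l), u (edge i l + 1)) (reflWalk c u (swapIf b ∘ u) i l) := by
      refine Fin.forall_fin_two.2 ⟨fun l => simDIII_refl (hE l), fun l => ?_⟩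
      rw [reflWalk_one]
      exact simDIII_swapIf_reverse (hE _) b
    have hEE : ∀ e e', simDIII n (u e, u (e + 1)) (u e', u (e' + 1)) ↔ e = e' := by
      refine fun e e' => ⟨fun h => (hu.eq_of_same_edge hm h.pos_eq).symm, ?_⟩
      rintro rfl
      exact simDIII_refl (hE e)
    refine ⟨fun _ _ => rfl, fun i l => (hEP i l).2.1, fun i l i' l' => ?_⟩
    rw [← simDIII_congr (hEP i l) (hEP i' l'), hEE]
    fin_cases i <;> fin_cases i' <;>
      simp only [edge, Fin.isValue, Fin.zero_eta, Fin.mk_one, ↓reduceIte, one_ne_zero, zero_ne_one,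
        sub_right_inj, true_and, false_and, and_false, and_self, or_self, or_false, false_or]
    all_goals constructor <;> rintro rfl <;> ring

end GoodWalks

section Moments

open MeasureTheory DIII

variable {Ω : Type*} {n m : ℕ} [NeZero m] {σ : ℝ} {Y : Fin 2 → Ω → Matrix (Fin n) (Fin n) ℂ}

theorem dIIIBlock_mem_MDIII_of_skew (him : ∀ i ω a b, (Y i ω a b).re = 0)
    (hskew : ∀ i ω a b, Y i ω b a = -Y i ω a b) (ω : Ω) :
    dIIIBlock (Y 0 ω) (Y 1 ω) ∈ MDIII n :=
  have hT : ∀ i, (Y i ω)ᵀ = -Y i ω := fun i => by ext a b; exact hskew i ω a b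
  dIIIBlock_mem_MDIII (him 0 ω) (him 1 ω) (hT 0) (hT 1)

variable [MeasurableSpace Ω] {μ : Measure Ω}

theorem integral_sq_of_re_eq_zero {f : Ω → ℂ} (hf : ∀ ω, (f ω).re = 0) :
    ∫ ω, f ω ^ 2 ∂μ = -((∫ ω, ‖f ω‖ ^ 2 ∂μ : ℝ) : ℂ) := by
  have h : ∀ ω, f ω ^ 2 = ((-‖f ω‖ ^ 2 : ℝ) : ℂ) := fun ω => by
    have hn := Complex.sq_norm (f ω)
    rw [Complex.normSq_apply, hf ω] at hn
    apply Complex.ext <;> simp [sq, hf ω]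
    linear_combination -hn
  simp_rw [h]
  rw [integral_complex_ofReal, integral_neg, Complex.ofReal_neg]

variable (him : ∀ i ω a b, (Y i ω a b).re = 0) (hskew : ∀ i ω a b, Y i ω b a = -Y i ω a b)
  (hvar : ∀ i (a b : Fin n), a ≠ b → ∫ ω, ‖Y i ω a b‖ ^ 2 ∂μ = σ ^ 2)
include him hvar

theorem integral_dIIIBlock_sq {p q : Fin n ⊕ Fin n} (hpq : pos p ≠ pos q) :
    ∫ ω, dIIIBlock (Y 0 ω) (Y 1 ω) p q ^ 2 ∂μ = -(σ : ℂ) ^ 2 := by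
  obtain ⟨i, hi⟩ : ∃ i, ∀ ω, (if p.isRight = q.isRight then Y 0 ω else Y 1 ω) = Y i ω :=
    ⟨if p.isRight = q.isRight then 0 else 1, fun ω => by split_ifs <;> rfl⟩
  simp_rw [dIIIBlock_apply_sq, hi, integral_sq_of_re_eq_zero fun ω => him i ω _ _,
    hvar i _ _ hpq]
  push_cast
  rfl

include hskew

theorem norm_integral_mul_of_simDIII {P Q : (Fin n ⊕ Fin n) × (Fin n ⊕ Fin n)}
    (h : simDIII n P Q) :
    ‖∫ ω, dIIIBlock (Y 0 ω) (Y 1 ω) P.1 P.2 * dIIIBlock (Y 0 ω) (Y 1 ω) Q.1 Q.2 ∂μ‖ = σ ^ 2 := by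
  obtain ⟨hP, -, ε, hε, hPQ⟩ := simDIII_iff_exists_sign.1 h
  have hpt : ∀ ω, dIIIBlock (Y 0 ω) (Y 1 ω) P.1 P.2 * dIIIBlock (Y 0 ω) (Y 1 ω) Q.1 Q.2 =
      ε * dIIIBlock (Y 0 ω) (Y 1 ω) P.1 P.2 ^ 2 := fun ω => by
    rw [hPQ _ (dIIIBlock_mem_MDIII_of_skew him hskew ω)]
    ring
  simp_rw [hpt, integral_const_mul, integral_dIIIBlock_sq him hvar (nonzeroAtDIII_iff.1 hP)]
  rcases mul_self_eq_one_iff.1 hε with rfl | rfl <;> simp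

theorem integral_mul_swapIf_reverse {p q : Fin n ⊕ Fin n} (hpq : pos p ≠ pos q) (b : Bool) :
    ∫ ω, dIIIBlock (Y 0 ω) (Y 1 ω) p q * dIIIBlock (Y 0 ω) (Y 1 ω) (swapIf b q) (swapIf b p) ∂μ =
      (if b ∧ p.isRight = q.isRight then -1 else 1) * (σ : ℂ) ^ 2 := by
  have hpt : ∀ ω, dIIIBlock (Y 0 ω) (Y 1 ω) p q *
      dIIIBlock (Y 0 ω) (Y 1 ω) (swapIf b q) (swapIf b p) =
      -(if b ∧ p.isRight = q.isRight then -1 else 1) * dIIIBlock (Y 0 ω) (Y 1 ω) p q ^ 2 :=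
    fun ω => by
      rw [MDIII.apply_swapIf_swapIf (dIIIBlock_mem_MDIII_of_skew him hskew ω)]
      ring
  simp_rw [hpt, integral_const_mul, integral_dIIIBlock_sq him hvar hpq]
  ring

theorem norm_prod_integral_of_sGoodDIII {g : Fin m → Fin m}
    {P : Fin 2 → Fin m → (Fin n ⊕ Fin n) × (Fin n ⊕ Fin n)} (h : SGoodDIII n m g P) :
    ‖∏ l, ∫ ω, dIIIBlock (Y 0 ω) (Y 1 ω) (P 0 l).1 (P 0 l).2 *
      dIIIBlock (Y 0 ω) (Y 1 ω) (P 1 (g l)).1 (P 1 (g l)).2 ∂μ‖ = σ ^ (2 * m) := by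
  rw [norm_prod, Finset.prod_congr rfl fun l _ =>
    norm_integral_mul_of_simDIII him hskew hvar (h.simDIII l), Finset.prod_const,
    Finset.card_univ, Fintype.card_fin, pow_mul]

theorem prod_integral_reflWalk_swapIf {c : Fin m} {u : Fin m → Fin n ⊕ Fin n}
    (hu : ∀ l, pos (u l) ≠ pos (u (l + 1))) (b : Bool) :
    ∏ l, ∫ ω, dIIIBlock (Y 0 ω) (Y 1 ω) (reflWalk c u (swapIf b ∘ u) 0 l).1
        (reflWalk c u (swapIf b ∘ u) 0 l).2 *
      dIIIBlock (Y 0 ω) (Y 1 ω) (reflWalk c u (swapIf b ∘ u) 1 (c - l)).1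
        (reflWalk c u (swapIf b ∘ u) 1 (c - l)).2 ∂μ =
      (if b then (-1) ^ m else 1) * (σ : ℂ) ^ (2 * m) := by
  simp only [reflWalk_zero, reflWalk_one_sub, Function.comp_apply]
  rw [Finset.prod_congr rfl fun l _ => integral_mul_swapIf_reverse him hskew hvar (hu l) b,
    Finset.prod_mul_distrib, Finset.prod_const, Finset.card_univ, Fintype.card_fin, ← pow_mul]
  cases b
  · simp
  · simp only [true_and, if_true]
    rw [prod_ite_eq_apply_add_one]

end Moments

section Counting

open Function Finset DIII

variable {n m : ℕ}

def injectivePosEquiv :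
    {u : Fin m → Fin n ⊕ Fin n // Injective (pos ∘ u)} ≃ (Fin m → Bool) × (Fin m ↪ Fin n) where
  toFun u := (fun l => (u.1 l).isRight, ⟨pos ∘ u.1, u.2⟩)
  invFun x := ⟨fun l => swapIf (x.1 l) (.inl (x.2 l)), by
    simpa [Function.comp_def] using x.2.injective⟩
  left_inv := by
    rintro ⟨u, hu⟩
    ext l : 2
    cases h : u l <;> simp [swapIf, h]
  right_inv := by
    rintro ⟨d, a⟩
    ext l <;> by_cases hd : d l <;> simp [swapIf, hd]

theorem card_injective_pos :
    #{u : Fin m → Fin n ⊕ Fin n | Injective (pos ∘ u)} = 2 ^ m * n.descFactorial m := by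
  rw [← Fintype.card_subtype, Fintype.card_congr injectivePosEquiv, Fintype.card_prod,
    Fintype.card_embedding_eq]
  simp

theorem card_not_injective_pos :
    #{u : Fin m → Fin n ⊕ Fin n | ¬Injective (pos ∘ u)} =
      (2 * n) ^ m - 2 ^ m * n.descFactorial m := by
  have h := card_filter_add_card_filter_not (s := univ)
    fun u : Fin m → Fin n ⊕ Fin n => Injective (pos ∘ u)
  simp only [card_injective_pos, card_univ, Fintype.card_fun, Fintype.card_sum,
    Fintype.card_fin, ← two_mul] at h
  omega

end Counting

section Sum

open Function Finset DIII MeasureTheory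
open scoped Classical

variable {Ω : Type*} [MeasurableSpace Ω] {μ : Measure Ω} {n m : ℕ} [NeZero m] {σ : ℝ}
  {Y : Fin 2 → Ω → Matrix (Fin n) (Fin n) ℂ}

theorem filter_sGoodDIII_reflWalk_injective_eq_image (hm : 3 ≤ m) (c : Fin m) :
    ({uw | SGoodDIII n m (c - ·) (reflWalk c uw.1 uw.2) ∧ Injective (pos ∘ uw.1)} :
        Finset ((Fin m → Fin n ⊕ Fin n) × (Fin m → Fin n ⊕ Fin n))) =
      (({u | Injective (pos ∘ u)} : Finset (Fin m → Fin n ⊕ Fin n)) ×ˢ (univ : Finset Bool)).image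
        fun ub => (ub.1, swapIf ub.2 ∘ ub.1) := by
  ext ⟨u, w⟩
  simp only [mem_filter, mem_univ, true_and, mem_image, mem_product, and_true, Prod.mk.injEq,
    Prod.exists]
  constructor
  · rintro ⟨h, hu⟩
    obtain ⟨b, rfl⟩ := (sGoodDIII_reflWalk_iff hm hu).1 h
    exact ⟨u, b, hu, rfl, rfl⟩
  · rintro ⟨u, b, hu, rfl, rfl⟩
    exact ⟨(sGoodDIII_reflWalk_iff hm hu).2 ⟨b, rfl⟩, hu⟩

theorem card_filter_sGoodDIII_reflWalk_not_injective_le (c : Fin m) :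
    #{uw : (Fin m → Fin n ⊕ Fin n) × (Fin m → Fin n ⊕ Fin n) |
        SGoodDIII n m (c - ·) (reflWalk c uw.1 uw.2) ∧ ¬Injective (pos ∘ uw.1)} ≤
      #{u : Fin m → Fin n ⊕ Fin n | ¬Injective (pos ∘ u)} * 2 ^ m * 2 := by
  -- A good walk is determined by its first walk, the blocks of its second walk and the
  -- orientation of the first step of the second walk.
  let code : (Fin m → Fin n ⊕ Fin n) × (Fin m → Fin n ⊕ Fin n) →
      (Fin m → Fin n ⊕ Fin n) × ((Fin m → Bool) × Bool) :=
    fun uw => (uw.1, fun l => (uw.2 l).isRight, decide (pos (uw.2 0) = pos (uw.1 0)))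
  calc _ ≤ #(({u | ¬Injective (pos ∘ u)} : Finset (Fin m → Fin n ⊕ Fin n)) ×ˢ
        (univ : Finset ((Fin m → Bool) × Bool))) := by
        refine card_le_card_of_injOn code (fun uw huw => ?_) ?_
        · simp only [mem_coe, mem_filter, mem_univ, true_and] at huw
          simp [code, huw.2]
        · rintro ⟨u, w⟩ huw ⟨u', w'⟩ huw' heq
          simp only [mem_coe, mem_filter, mem_univ, true_and] at huw huw'
          simp only [code, Prod.mk.injEq, decide_eq_decide] at heq
          obtain ⟨rfl, hblock, horient⟩ := heq
          have hw := huw.1.reflWalk_sameSteps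
          have hw' := huw'.1.reflWalk_sameSteps
          have h0 : pos (w 0) = pos (w' 0) := by
            by_cases h : pos (w 0) = pos (u 0)
            · rw [h, horient.1 h]
            · exact ((hw 0).resolve_left fun h' => h h'.1).1.trans
                ((hw' 0).resolve_left fun h' => h (horient.2 h'.1)).1.symm
          have hpos := SameSteps.eq_of_apply_zero_eq (fun l => (huw.1.reflWalk_steps l).1) hw hw' h0
          simp only [Prod.mk.injEq, true_and]
          exact funext fun l => eq_of_pos_eq_of_isRight_eq (congrFun hpos l) (congrFun hblock l)
    _ = _ := by simp [card_product, mul_assoc]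

variable (him : ∀ i ω a b, (Y i ω a b).re = 0) (hskew : ∀ i ω a b, Y i ω b a = -Y i ω a b)
  (hvar : ∀ i (a b : Fin n), a ≠ b → ∫ ω, ‖Y i ω a b‖ ^ 2 ∂μ = σ ^ 2)
include him hskew hvar

theorem sum_sGoodDIII_reflWalk_injective (hm : 3 ≤ m) (c : Fin m) :
    ∑ uw ∈ {uw : (Fin m → Fin n ⊕ Fin n) × (Fin m → Fin n ⊕ Fin n) |
        SGoodDIII n m (c - ·) (reflWalk c uw.1 uw.2) ∧ Injective (pos ∘ uw.1)},
      ∏ l, ∫ ω, dIIIBlock (Y 0 ω) (Y 1 ω) (reflWalk c uw.1 uw.2 0 l).1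
          (reflWalk c uw.1 uw.2 0 l).2 *
        dIIIBlock (Y 0 ω) (Y 1 ω) (reflWalk c uw.1 uw.2 1 (c - l)).1
          (reflWalk c uw.1 uw.2 1 (c - l)).2 ∂μ =
      n.descFactorial m * (2 ^ m * (1 + (-1) ^ m) * (σ : ℂ) ^ (2 * m)) := by
  have hinj : Set.InjOn (fun ub : (Fin m → Fin n ⊕ Fin n) × Bool => (ub.1, swapIf ub.2 ∘ ub.1))
      ↑(({u | Injective (pos ∘ u)} : Finset (Fin m → Fin n ⊕ Fin n)) ×ˢ (univ : Finset Bool)) := by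
    rintro ⟨u, b⟩ - ⟨u', b'⟩ - h
    simp only [Prod.mk.injEq] at h ⊢
    obtain ⟨rfl, h⟩ := h
    exact ⟨rfl, swapIf_left_injective (u 0) (congrFun h 0)⟩
  rw [filter_sGoodDIII_reflWalk_injective_eq_image hm, sum_image hinj, sum_product]
  calc _ = ∑ u ∈ ({u | Injective (pos ∘ u)} : Finset (Fin m → Fin n ⊕ Fin n)),
        (1 + (-1) ^ m) * (σ : ℂ) ^ (2 * m) := by
        refine sum_congr rfl fun u hu => ?_
        have hu := (mem_filter.1 hu).2.apply_ne_apply_add_one (by omega)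
        rw [Fintype.sum_bool, prod_integral_reflWalk_swapIf him hskew hvar hu,
          prod_integral_reflWalk_swapIf him hskew hvar hu]
        simp only [if_true, Bool.false_eq_true, if_false]
        ring
    _ = _ := by
        rw [sum_const, card_injective_pos, nsmul_eq_mul]
        push_cast
        ring

theorem norm_finsum_sGoodDIII_sub_le (hm : 3 ≤ m) (c : Fin m) :
    ‖(∑ᶠ P ∈ {P : Fin 2 → Fin m → (Fin n ⊕ Fin n) × (Fin n ⊕ Fin n) | SGoodDIII n m (c - ·) P},
        ∏ l, ∫ ω, dIIIBlock (Y 0 ω) (Y 1 ω) (P 0 l).1 (P 0 l).2 *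
          dIIIBlock (Y 0 ω) (Y 1 ω) (P 1 (c - l)).1 (P 1 (c - l)).2 ∂μ) -
        n.descFactorial m * (2 ^ m * (1 + (-1) ^ m) * (σ : ℂ) ^ (2 * m))‖ ≤
      2 ^ (2 * m + 1) * σ ^ (2 * m) * (n ^ m - n.descFactorial m) := by
  rw [setOf_sGoodDIII_eq_image_reflWalk, finsum_mem_image (reflWalk_injective c).injOn,
    ← coe_filter_univ, finsum_mem_coe_finset,
    ← sum_filter_add_sum_filter_not _ fun uw => Injective (pos ∘ uw.1), filter_filter,
    filter_filter, sum_sGoodDIII_reflWalk_injective him hskew hvar hm, add_sub_cancel_left]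
  have hle : 2 ^ m * n.descFactorial m ≤ (2 * n) ^ m := by
    rw [mul_pow]
    exact Nat.mul_le_mul_left _ (Nat.descFactorial_le_pow n m)
  calc _ ≤ ∑ uw ∈ ({uw | SGoodDIII n m (c - ·) (reflWalk c uw.1 uw.2) ∧
        ¬Injective (pos ∘ uw.1)} : Finset ((Fin m → Fin n ⊕ Fin n) × (Fin m → Fin n ⊕ Fin n))),
        σ ^ (2 * m) :=
        norm_sum_le_of_le _ fun uw huw =>
          (norm_prod_integral_of_sGoodDIII him hskew hvar (mem_filter.1 huw).2.1).le
    _ ≤ (#{u : Fin m → Fin n ⊕ Fin n | ¬Injective (pos ∘ u)} * 2 ^ m * 2 : ℕ) * σ ^ (2 * m) := by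
        rw [sum_const, nsmul_eq_mul]
        refine mul_le_mul_of_nonneg_right ?_ (by rw [pow_mul]; positivity)
        exact_mod_cast card_filter_sGoodDIII_reflWalk_not_injective_le c
    _ = _ := by
        rw [card_not_injective_pos, Nat.cast_mul, Nat.cast_mul, Nat.cast_sub hle]
        push_cast
        ring

end Sum

open Filter Topology in
theorem tendsto_inv_pow_mul_of_norm_sub_descFactorial_le {s : ℕ → ℂ} {L : ℂ} {C : ℝ} (m : ℕ)
    (h : ∀ n : ℕ, ‖s n - n.descFactorial m * L‖ ≤ C * (n ^ m - n.descFactorial m)) :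
    Tendsto (fun n : ℕ => ((n : ℂ) ^ m)⁻¹ * s n) atTop (𝓝 L) := by
  have hq : Tendsto (fun n : ℕ => (n.descFactorial m : ℝ) / n ^ m) atTop (𝓝 1) :=
    (Asymptotics.isEquivalent_iff_tendsto_one ((eventually_ne_atTop 0).mono fun n hn =>
      pow_ne_zero _ (Nat.cast_ne_zero.2 hn))).1
      (isEquivalent_descFactorial m)
  have hmain : Tendsto (fun n : ℕ => (((n.descFactorial m : ℝ) / n ^ m : ℝ) : ℂ) * L) atTop
      (𝓝 L) := by
    simpa using ((Complex.continuous_ofReal.tendsto 1).comp hq).mul_const L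
  have herr : Tendsto (fun n : ℕ => ((n : ℂ) ^ m)⁻¹ * s n -
      (((n.descFactorial m : ℝ) / n ^ m : ℝ) : ℂ) * L) atTop (𝓝 0) := by
    refine squeeze_zero_norm' ?_
      (by simpa using ((tendsto_const_nhds (x := (1 : ℝ))).sub hq).const_mul C)
    filter_upwards [eventually_ne_atTop 0] with n hn
    have hn' : (n : ℂ) ^ m ≠ 0 := pow_ne_zero _ (Nat.cast_ne_zero.2 hn)
    calc _ = ‖((n : ℂ) ^ m)⁻¹ * (s n - n.descFactorial m * L)‖ := by
          congr 1
          push_cast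
          field_simp
      _ ≤ ((n : ℝ) ^ m)⁻¹ * (C * (n ^ m - n.descFactorial m)) := by
          rw [norm_mul, norm_inv, norm_pow, Complex.norm_natCast]
          exact mul_le_mul_of_nonneg_left (h n) (by positivity)
      _ = C * (1 - n.descFactorial m / n ^ m) := by
          field_simp
  simpa using herr.add hmain

theorem stmt16_general
    {Ω : Type*} [MeasurableSpace Ω] (μ : Measure Ω)
    (σ : ℝ)
    (X : (n : ℕ) → Fin 2 → Ω → Matrix (Fin n) (Fin n) ℂ)
    (him : ∀ n i ω a b, (X n i ω a b).re = 0)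
    (hskew : ∀ n i ω a b, X n i ω b a = - X n i ω a b)
    (hvar : ∀ n i (a b : Fin n), a ≠ b → ∫ ω, ‖X n i ω a b‖ ^ 2 ∂μ = σ ^ 2)
    (m : ℕ) [NeZero m] (hm : 3 ≤ m) (ν : ℕ) (hν : ν < m)
    -- `g = τ γ^ν` is a reflection: in the `0`-based labels `Fin m` of `[m]`,
    -- `γ : l ↦ l + 1`, `τ : l ↦ -l - 1`, so `g : l ↦ -(l + ν) - 1`.
    (g : Fin m → Fin m) (hg : g = fun l => -(l + ⟨ν, hν⟩) - 1) :
    Tendsto (fun n : ℕ =>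
      ((n : ℂ) ^ m)⁻¹ *
        ∑ᶠ P ∈ {P : Fin 2 → Fin m → ((Fin n ⊕ Fin n) × (Fin n ⊕ Fin n)) |
            SGoodDIII n m g P},
          ∏ l : Fin m, ∫ ω, dIIIBlock (X n 0 ω) (X n 1 ω) (P 0 l).1 (P 0 l).2 *
            dIIIBlock (X n 0 ω) (X n 1 ω) (P 1 (g l)).1 (P 1 (g l)).2 ∂μ)
      atTop
      (nhds (if Odd m then 0 else 2 ^ (m + 1) * (σ : ℂ) ^ (2 * m))) := by
  obtain rfl : g = (-⟨ν, hν⟩ - 1 - ·) := hg.trans <| funext fun l => by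
    open scoped Fin.CommRing in ring
  have hlimit : (if Odd m then 0 else 2 ^ (m + 1) * (σ : ℂ) ^ (2 * m)) =
      2 ^ m * (1 + (-1) ^ m) * (σ : ℂ) ^ (2 * m) := by
    rcases Nat.even_or_odd m with hm' | hm'
    · rw [if_neg (Nat.not_odd_iff_even.2 hm'), hm'.neg_one_pow, pow_succ]
      ring
    · rw [if_pos hm', hm'.neg_one_pow]
      ring
  rw [hlimit]
  exact tendsto_inv_pow_mul_of_norm_sub_descFactorial_le m fun n =>
    norm_finsum_sGoodDIII_sub_le (him n) (hskew n) (hvar n) hm _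

theorem stmt16
    {Ω : Type*} [MeasurableSpace Ω] (μ : Measure Ω) [IsProbabilityMeasure μ]
    (σ : ℝ) (hσ : 0 < σ)
    (X : (n : ℕ) → Fin 2 → Ω → Matrix (Fin n) (Fin n) ℂ)
    (hmeas : ∀ n i a b, Measurable fun ω => X n i ω a b)
    (him : ∀ n i ω a b, (X n i ω a b).re = 0)
    (hskew : ∀ n i ω a b, X n i ω b a = - X n i ω a b)
    (hindep : ∀ n, iIndepFun
      (fun (v : {v : Fin 2 × Fin n × Fin n // v.2.1 < v.2.2}) ω =>
        X n v.1.1 ω v.1.2.1 v.1.2.2) μ)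
    (hcent : ∀ n i a b, ∫ ω, X n i ω a b ∂μ = 0)
    (hvar : ∀ n i (a b : Fin n), a ≠ b → ∫ ω, ‖X n i ω a b‖ ^ 2 ∂μ = σ ^ 2)
    (hmom : ∀ k : ℕ, ∃ C : ℝ, ∀ n i (a b : Fin n),
      ∫ ω, ‖X n i ω a b‖ ^ k ∂μ ≤ C)
    (m : ℕ) [NeZero m] (hm : 3 ≤ m) (ν : ℕ) (hν : ν < m)
    -- `g = τ γ^ν` is a reflection: in the `0`-based labels `Fin m` of `[m]`,
    -- `γ : l ↦ l + 1`, `τ : l ↦ -l - 1`, so `g : l ↦ -(l + ν) - 1`.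
    (g : Fin m → Fin m) (hg : g = fun l => -(l + ⟨ν, hν⟩) - 1) :
    Tendsto (fun n : ℕ =>
      ((n : ℂ) ^ m)⁻¹ *
        ∑ᶠ P ∈ {P : Fin 2 → Fin m → ((Fin n ⊕ Fin n) × (Fin n ⊕ Fin n)) |
            SGoodDIII n m g P},
          ∏ l : Fin m, ∫ ω, dIIIBlock (X n 0 ω) (X n 1 ω) (P 0 l).1 (P 0 l).2 *
            dIIIBlock (X n 0 ω) (X n 1 ω) (P 1 (g l)).1 (P 1 (g l)).2 ∂μ)
      atTop
      (nhds (if Odd m then 0 else 2 ^ (m + 1) * (σ : ℂ) ^ (2 * m))) :=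
  stmt16_general μ σ X him hskew hvar m hm ν hν g hg
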